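/- arXiv:2106.04145 — 5 statements merged into one kernel-verified Lean document; each statement's English description precedes it below -/
import Mathlib

section
/- Let φ : ℝ → ℝ be convex and differentiable, let C ∈ ℝ^{n×m}, a ∈ ℝ^n, b ∈ ℝ^m, λ > 0, let T̃ ∈ ℝ^{n×m} have strictly positive entries, and let S ⊆ ℝ^{n×m} be any set containing T̃. If T' ∈ S satisfies G_λ(T' | T̃) ≤ G_λ(T | T̃) for all T ∈ S, then F_λ(T') ≤ F_λ(T̃); that is, each majorization–minimization step does not increase the unbalanced optimal transport objective. -/
open Finset

/-- Pointwise Bregman divergence generated by `φ`. -/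
noncomputable def dphi (φ : ℝ → ℝ) (u v : ℝ) : ℝ :=
  φ u - φ v - deriv φ v * (u - v)

/-- The unbalanced optimal transport objective. -/
noncomputable def Fobj {n m : ℕ} (φ : ℝ → ℝ) (C : Matrix (Fin n) (Fin m) ℝ)
    (a : Fin n → ℝ) (b : Fin m → ℝ) (lam : ℝ) (T : Matrix (Fin n) (Fin m) ℝ) : ℝ :=
  (∑ i, ∑ j, C i j * T i j)
    + lam * ∑ i, dphi φ (∑ j, T i j) (a i)
    + lam * ∑ j, dphi φ (∑ i, T i j) (b j)

/-- The MM auxiliary function `G_λ(T | T̃)`. -/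
noncomputable def Gaux {n m : ℕ} (φ : ℝ → ℝ) (C : Matrix (Fin n) (Fin m) ℝ)
    (a : Fin n → ℝ) (b : Fin m → ℝ) (lam : ℝ)
    (T Ttil : Matrix (Fin n) (Fin m) ℝ) : ℝ :=
  ∑ i, ∑ j,
    (C i j * T i j
      + lam * (Ttil i j / ∑ l, Ttil i l) *
          dphi φ (T i j / (Ttil i j / ∑ l, Ttil i l)) (a i)
      + lam * (Ttil i j / ∑ k, Ttil k j) *
          dphi φ (T i j / (Ttil i j / ∑ k, Ttil k j)) (b j))

lemma dphi_convex (φ : ℝ → ℝ) (hφ : ConvexOn ℝ Set.univ φ) (v : ℝ) :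
    ConvexOn ℝ Set.univ (fun u => dphi φ u v) := by
  refine ⟨convex_univ, ?_⟩
  intro x _ y _ p q hp hq hpq
  have h := hφ.2 (Set.mem_univ x) (Set.mem_univ y) hp hq hpq
  simp only [dphi, smul_eq_mul] at *
  have key : p * (φ x - φ v - deriv φ v * (x - v)) + q * (φ y - φ v - deriv φ v * (y - v))
      = p * φ x + q * φ y - φ v - deriv φ v * (p * x + q * y - v) := by
    linear_combination (deriv φ v * v - φ v) * hpq
  linarith [h, key]

lemma jensen_dphi (φ : ℝ → ℝ) (hφ : ConvexOn ℝ Set.univ φ) {k : ℕ}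
    (w : Fin k → ℝ) (hw : ∀ j, 0 < w j) (hw1 : ∑ j, w j = 1)
    (x : Fin k → ℝ) (v : ℝ) :
    dphi φ (∑ j, x j) v ≤ ∑ j, w j * dphi φ (x j / w j) v := by
  have hc := dphi_convex φ hφ v
  have h := hc.map_sum_le (w := w) (p := fun j => x j / w j)
    (fun j _ => (hw j).le) hw1 (fun j _ => Set.mem_univ _)
  simp only [smul_eq_mul] at h
  have he : ∑ j, w j * (x j / w j) = ∑ j, x j := by
    refine Finset.sum_congr rfl fun j _ => ?_
    rw [mul_div_assoc']
    exact mul_div_cancel_left₀ _ (hw j).ne'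
  rwa [he] at h

/-- A majorization–minimization step does not increase the UOT objective:
if `T'` minimizes `G_λ(· | T̃)` over a set `S` containing `T̃`, then
`F_λ(T') ≤ F_λ(T̃)`. -/
theorem mm_step_decreases {n m : ℕ} (φ : ℝ → ℝ)
    (hφconv : ConvexOn ℝ Set.univ φ) (hφdiff : Differentiable ℝ φ)
    (C : Matrix (Fin n) (Fin m) ℝ) (a : Fin n → ℝ) (b : Fin m → ℝ)
    (lam : ℝ) (hlam : 0 < lam)
    (Ttil : Matrix (Fin n) (Fin m) ℝ) (hTtil : ∀ i j, 0 < Ttil i j)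
    (S : Set (Matrix (Fin n) (Fin m) ℝ)) (hTtilS : Ttil ∈ S)
    (T' : Matrix (Fin n) (Fin m) ℝ) (hT'S : T' ∈ S)
    (hmin : ∀ T ∈ S, Gaux φ C a b lam T' Ttil ≤ Gaux φ C a b lam T Ttil) :
    Fobj φ C a b lam T' ≤ Fobj φ C a b lam Ttil := by
  rcases Nat.eq_zero_or_pos m with hm | hm
  · subst hm
    have hTT : T' = Ttil := by ext i j; exact j.elim0
    rw [hTT]
  rcases Nat.eq_zero_or_pos n with hn | hn
  · subst hn
    have hTT : T' = Ttil := by ext i j; exact i.elim0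
    rw [hTT]
  haveI : Nonempty (Fin m) := Fin.pos_iff_nonempty.mp hm
  haveI : Nonempty (Fin n) := Fin.pos_iff_nonempty.mp hn
  have hrowpos : ∀ i, 0 < ∑ l, Ttil i l :=
    fun i => Finset.sum_pos (fun l _ => hTtil i l) Finset.univ_nonempty
  have hcolpos : ∀ j, 0 < ∑ k, Ttil k j :=
    fun j => Finset.sum_pos (fun k _ => hTtil k j) Finset.univ_nonempty
  have hrow1 : ∀ i, ∑ j, Ttil i j / (∑ l, Ttil i l) = 1 := fun i => by
    rw [← Finset.sum_div, div_self (hrowpos i).ne']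
  have hcol1 : ∀ j, ∑ k, Ttil k j / (∑ k, Ttil k j) = 1 := fun j => by
    rw [← Finset.sum_div, div_self (hcolpos j).ne']
  -- Step 1: G(T̃ | T̃) = F(T̃)
  have hGeqF : Gaux φ C a b lam Ttil Ttil = Fobj φ C a b lam Ttil := by
    unfold Gaux Fobj
    simp only [Finset.sum_add_distrib]
    congr 1
    · congr 1
      rw [Finset.mul_sum]
      refine Finset.sum_congr rfl fun i _ => ?_
      calc ∑ j, lam * (Ttil i j / ∑ l, Ttil i l) *
              dphi φ (Ttil i j / (Ttil i j / ∑ l, Ttil i l)) (a i)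
          = ∑ j, (Ttil i j / ∑ l, Ttil i l) * (lam * dphi φ (∑ l, Ttil i l) (a i)) := by
            refine Finset.sum_congr rfl fun j _ => ?_
            rw [div_div_eq_mul_div, mul_div_cancel_left₀ _ (hTtil i j).ne']
            ring
        _ = lam * dphi φ (∑ l, Ttil i l) (a i) := by
            rw [← Finset.sum_mul, hrow1 i, one_mul]
    · rw [Finset.sum_comm, Finset.mul_sum]
      refine Finset.sum_congr rfl fun j _ => ?_
      calc ∑ i, lam * (Ttil i j / ∑ k, Ttil k j) *
              dphi φ (Ttil i j / (Ttil i j / ∑ k, Ttil k j)) (b j)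
          = ∑ i, (Ttil i j / ∑ k, Ttil k j) * (lam * dphi φ (∑ k, Ttil k j) (b j)) := by
            refine Finset.sum_congr rfl fun i _ => ?_
            rw [div_div_eq_mul_div, mul_div_cancel_left₀ _ (hTtil i j).ne']
            ring
        _ = lam * dphi φ (∑ k, Ttil k j) (b j) := by
            rw [← Finset.sum_mul, hcol1 j, one_mul]
  -- Step 2: F(T') ≤ G(T' | T̃)
  have hFleG : Fobj φ C a b lam T' ≤ Gaux φ C a b lam T' Ttil := by
    have hrow : ∀ i, lam * dphi φ (∑ j, T' i j) (a i) ≤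
        ∑ j, lam * (Ttil i j / ∑ l, Ttil i l) *
          dphi φ (T' i j / (Ttil i j / ∑ l, Ttil i l)) (a i) := by
      intro i
      have h := jensen_dphi φ hφconv (fun j => Ttil i j / ∑ l, Ttil i l)
        (fun j => div_pos (hTtil i j) (hrowpos i)) (hrow1 i) (fun j => T' i j) (a i)
      calc lam * dphi φ (∑ j, T' i j) (a i)
          ≤ lam * ∑ j, (Ttil i j / ∑ l, Ttil i l) *
              dphi φ (T' i j / (Ttil i j / ∑ l, Ttil i l)) (a i) :=
            mul_le_mul_of_nonneg_left h hlam.le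
        _ = _ := by rw [Finset.mul_sum]; exact Finset.sum_congr rfl fun j _ => by ring
    have hcol : ∀ j, lam * dphi φ (∑ i, T' i j) (b j) ≤
        ∑ i, lam * (Ttil i j / ∑ k, Ttil k j) *
          dphi φ (T' i j / (Ttil i j / ∑ k, Ttil k j)) (b j) := by
      intro j
      have h := jensen_dphi φ hφconv (fun i => Ttil i j / ∑ k, Ttil k j)
        (fun i => div_pos (hTtil i j) (hcolpos j)) (hcol1 j) (fun i => T' i j) (b j)
      calc lam * dphi φ (∑ i, T' i j) (b j)
          ≤ lam * ∑ i, (Ttil i j / ∑ k, Ttil k j) *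
              dphi φ (T' i j / (Ttil i j / ∑ k, Ttil k j)) (b j) :=
            mul_le_mul_of_nonneg_left h hlam.le
        _ = _ := by rw [Finset.mul_sum]; exact Finset.sum_congr rfl fun i _ => by ring
    unfold Fobj Gaux
    simp only [Finset.sum_add_distrib]
    have h1 : lam * ∑ i, dphi φ (∑ j, T' i j) (a i) ≤
        ∑ i, ∑ j, lam * (Ttil i j / ∑ l, Ttil i l) *
          dphi φ (T' i j / (Ttil i j / ∑ l, Ttil i l)) (a i) := by
      rw [Finset.mul_sum]
      exact Finset.sum_le_sum fun i _ => hrow i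
    have h2 : lam * ∑ j, dphi φ (∑ i, T' i j) (b j) ≤
        ∑ i, ∑ j, lam * (Ttil i j / ∑ k, Ttil k j) *
          dphi φ (T' i j / (Ttil i j / ∑ k, Ttil k j)) (b j) := by
      rw [Finset.sum_comm, Finset.mul_sum]
      exact Finset.sum_le_sum fun j _ => hcol j
    linarith
  calc Fobj φ C a b lam T' ≤ Gaux φ C a b lam T' Ttil := hFleG
    _ ≤ Gaux φ C a b lam Ttil Ttil := hmin Ttil hTtilS
    _ = Fobj φ C a b lam Ttil := hGeqF
end

section
/- Let φ(x) = x·log x − x (the Kullback–Leibler potential, with φ'(x) = log x), let C ∈ ℝ^{n×m}, let a ∈ ℝ^n and b ∈ ℝ^m have strictly positive entries, let λ > 0, and let T̃ ∈ ℝ^{n×m} have strictly positive entries. Then the matrix T* defined by T*_{i,j} = (a_i/ã_i)^{1/2} · T̃_{i,j} · exp(−C_{i,j}/(2λ)) · (b_j/b̃_j)^{1/2} is the unique minimizer of T ↦ G_λ(T | T̃) over matrices T with strictly positive entries. -/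
open Finset

/-- Pointwise Bregman divergence of the KL potential `φ(x) = x log x − x`:
`d_φ(u, v) = u log(u/v) − u + v`. -/
noncomputable def dKL (u v : ℝ) : ℝ := u * Real.log (u / v) - u + v

/-- The MM auxiliary function `G_λ(T | T̃)` for the KL potential. -/
noncomputable def GauxKL {n m : ℕ} (C : Matrix (Fin n) (Fin m) ℝ)
    (a : Fin n → ℝ) (b : Fin m → ℝ) (lam : ℝ)
    (T Ttil : Matrix (Fin n) (Fin m) ℝ) : ℝ :=
  ∑ i, ∑ j,
    (C i j * T i j
      + lam * (Ttil i j / ∑ l, Ttil i l) *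
          dKL (T i j / (Ttil i j / ∑ l, Ttil i l)) (a i)
      + lam * (Ttil i j / ∑ k, Ttil k j) *
          dKL (T i j / (Ttil i j / ∑ k, Ttil k j)) (b j))

lemma dKL_nonneg {u v : ℝ} (hu : 0 < u) (hv : 0 < v) : 0 ≤ dKL u v := by
  unfold dKL
  have h := Real.log_le_sub_one_of_pos (x := v / u) (by positivity)
  have hlog : Real.log (v / u) = - Real.log (u / v) := by
    rw [← Real.log_inv]; congr 1; field_simp
  rw [hlog] at h
  nlinarith [mul_le_mul_of_nonneg_left h hu.le, (div_mul_cancel₀ v hu.ne' : v / u * u = v)]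

lemma dKL_pos {u v : ℝ} (hu : 0 < u) (hv : 0 < v) (hne : u ≠ v) : 0 < dKL u v := by
  unfold dKL
  have h := Real.log_lt_sub_one_of_pos (x := v / u) (by positivity)
    (by intro h; apply hne; field_simp at h; linarith)
  have hlog : Real.log (v / u) = - Real.log (u / v) := by
    rw [← Real.log_inv]; congr 1; field_simp
  rw [hlog] at h
  nlinarith [mul_lt_mul_of_pos_left h hu, (div_mul_cancel₀ v hu.ne' : v / u * u = v)]

lemma key_entry (Cij lam A B av bv Tt t : ℝ) (hlam : 0 < lam) (hA : 0 < A)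
    (hB : 0 < B) (ha : 0 < av) (hb : 0 < bv) (hTt : 0 < Tt) (ht : 0 < t) :
    Cij * t + lam * (Tt / A) * dKL (t / (Tt / A)) av
      + lam * (Tt / B) * dKL (t / (Tt / B)) bv
    = (Cij * (Real.sqrt (av / A) * Tt * Real.exp (-Cij / (2 * lam)) * Real.sqrt (bv / B))
        + lam * (Tt / A) * dKL ((Real.sqrt (av / A) * Tt * Real.exp (-Cij / (2 * lam)) * Real.sqrt (bv / B)) / (Tt / A)) av
        + lam * (Tt / B) * dKL ((Real.sqrt (av / A) * Tt * Real.exp (-Cij / (2 * lam)) * Real.sqrt (bv / B)) / (Tt / B)) bv)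
      + 2 * lam * dKL t (Real.sqrt (av / A) * Tt * Real.exp (-Cij / (2 * lam)) * Real.sqrt (bv / B)) := by
  set ts := Real.sqrt (av / A) * Tt * Real.exp (-Cij / (2 * lam)) * Real.sqrt (bv / B) with hts
  have hts0 : 0 < ts := by
    have h1 : 0 < Real.sqrt (av / A) := Real.sqrt_pos.2 (by positivity)
    have h2 : 0 < Real.sqrt (bv / B) := Real.sqrt_pos.2 (by positivity)
    positivity
  have hlogts : Real.log ts
      = (Real.log av - Real.log A) / 2 + Real.log Tt - Cij / (2 * lam)
        + (Real.log bv - Real.log B) / 2 := by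
    rw [hts, Real.log_mul (by positivity) (by positivity),
        Real.log_mul (by positivity) (by positivity),
        Real.log_mul (by positivity) (by positivity),
        Real.log_exp, Real.log_sqrt (by positivity), Real.log_sqrt (by positivity),
        Real.log_div ha.ne' hA.ne', Real.log_div hb.ne' hB.ne']
    ring
  have e1 : Real.log (t / (Tt / A) / av) = Real.log t - (Real.log Tt - Real.log A) - Real.log av := by
    rw [Real.log_div (by positivity) ha.ne', Real.log_div ht.ne' (by positivity),
        Real.log_div hTt.ne' hA.ne']
  have e2 : Real.log (t / (Tt / B) / bv) = Real.log t - (Real.log Tt - Real.log B) - Real.log bv := by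
    rw [Real.log_div (by positivity) hb.ne', Real.log_div ht.ne' (by positivity),
        Real.log_div hTt.ne' hB.ne']
  have e3 : Real.log (ts / (Tt / A) / av) = Real.log ts - (Real.log Tt - Real.log A) - Real.log av := by
    rw [Real.log_div (by positivity) ha.ne', Real.log_div hts0.ne' (by positivity),
        Real.log_div hTt.ne' hA.ne']
  have e4 : Real.log (ts / (Tt / B) / bv) = Real.log ts - (Real.log Tt - Real.log B) - Real.log bv := by
    rw [Real.log_div (by positivity) hb.ne', Real.log_div hts0.ne' (by positivity),
        Real.log_div hTt.ne' hB.ne']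
  have e5 : Real.log (t / ts) = Real.log t - Real.log ts := Real.log_div ht.ne' hts0.ne'
  simp only [dKL, e1, e2, e3, e4, e5, hlogts]
  field_simp
  ring

/-- The KL multiplicative update
`T*_{i,j} = (a_i/ã_i)^{1/2} T̃_{i,j} exp(−C_{i,j}/(2λ)) (b_j/b̃_j)^{1/2}`
is the unique minimizer of `G_λ(· | T̃)` over matrices with positive entries. -/
theorem kl_update_minimizes_aux {n m : ℕ} (C : Matrix (Fin n) (Fin m) ℝ)
    (a : Fin n → ℝ) (b : Fin m → ℝ) (ha : ∀ i, 0 < a i) (hb : ∀ j, 0 < b j)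
    (lam : ℝ) (hlam : 0 < lam)
    (Ttil : Matrix (Fin n) (Fin m) ℝ) (hTtil : ∀ i j, 0 < Ttil i j)
    (Tstar : Matrix (Fin n) (Fin m) ℝ)
    (hTstarDef : ∀ i j, Tstar i j =
      Real.sqrt (a i / ∑ l, Ttil i l) * Ttil i j
        * Real.exp (-(C i j) / (2 * lam)) * Real.sqrt (b j / ∑ k, Ttil k j)) :
    (∀ i j, 0 < Tstar i j)
      ∧ (∀ T : Matrix (Fin n) (Fin m) ℝ, (∀ i j, 0 < T i j) →
          GauxKL C a b lam Tstar Ttil ≤ GauxKL C a b lam T Ttil)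
      ∧ (∀ T : Matrix (Fin n) (Fin m) ℝ, (∀ i j, 0 < T i j) →
          GauxKL C a b lam T Ttil = GauxKL C a b lam Tstar Ttil → T = Tstar) := by
  have hApos : ∀ (i : Fin n) (j : Fin m), 0 < ∑ l, Ttil i l := fun i j =>
    Finset.sum_pos (fun l _ => hTtil i l) ⟨j, mem_univ j⟩
  have hBpos : ∀ (i : Fin n) (j : Fin m), 0 < ∑ k, Ttil k j := fun i j =>
    Finset.sum_pos (fun k _ => hTtil k j) ⟨i, mem_univ i⟩
  have hTs : ∀ i j, 0 < Tstar i j := by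
    intro i j
    rw [hTstarDef i j]
    have h1 : 0 < Real.sqrt (a i / ∑ l, Ttil i l) :=
      Real.sqrt_pos.2 (by have := hApos i j; have := ha i; positivity)
    have h2 : 0 < Real.sqrt (b j / ∑ k, Ttil k j) :=
      Real.sqrt_pos.2 (by have := hBpos i j; have := hb j; positivity)
    have h3 := hTtil i j
    positivity
  have hkey : ∀ T : Matrix (Fin n) (Fin m) ℝ, (∀ i j, 0 < T i j) →
      GauxKL C a b lam T Ttil
        = GauxKL C a b lam Tstar Ttil
          + 2 * lam * ∑ i, ∑ j, dKL (T i j) (Tstar i j) := by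
    intro T hT
    unfold GauxKL
    rw [Finset.mul_sum, ← Finset.sum_add_distrib]
    refine Finset.sum_congr rfl fun i _ => ?_
    rw [Finset.mul_sum, ← Finset.sum_add_distrib]
    refine Finset.sum_congr rfl fun j _ => ?_
    have h := key_entry (C i j) lam (∑ l, Ttil i l) (∑ k, Ttil k j) (a i) (b j)
      (Ttil i j) (T i j) hlam (hApos i j) (hBpos i j) (ha i) (hb j) (hTtil i j) (hT i j)
    rw [← hTstarDef i j] at h
    exact h
  refine ⟨hTs, fun T hT => ?_, fun T hT heq => ?_⟩
  · rw [hkey T hT]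
    have hS : 0 ≤ ∑ i, ∑ j, dKL (T i j) (Tstar i j) :=
      Finset.sum_nonneg fun i _ => Finset.sum_nonneg fun j _ =>
        dKL_nonneg (hT i j) (hTs i j)
    nlinarith
  · have h := hkey T hT
    rw [heq] at h
    have h2 : 2 * lam * ∑ i, ∑ j, dKL (T i j) (Tstar i j) = 0 := by linarith
    have hS : ∑ i, ∑ j, dKL (T i j) (Tstar i j) = 0 := by
      rcases mul_eq_zero.1 h2 with h3 | h3
      · linarith
      · exact h3
    have hinner : ∀ i ∈ (univ : Finset (Fin n)), ∑ j, dKL (T i j) (Tstar i j) = 0 :=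
      (Finset.sum_eq_zero_iff_of_nonneg fun i _ =>
        Finset.sum_nonneg fun j _ => dKL_nonneg (hT i j) (hTs i j)).1 hS
    ext i j
    by_contra hne
    have hz : dKL (T i j) (Tstar i j) = 0 :=
      (Finset.sum_eq_zero_iff_of_nonneg fun j _ =>
        dKL_nonneg (hT i j) (hTs i j)).1 (hinner i (mem_univ i)) j (mem_univ j)
    exact absurd hz (ne_of_gt (dKL_pos (hT i j) (hTs i j) hne))
end

section
/- Let φ(x) = x·log x − x, let C ∈ ℝ^{n×m}, let a ∈ ℝ^n and b ∈ ℝ^m have strictly positive entries, let λ > 0, and let T̃ ∈ ℝ^{n×m} have strictly positive entries. Define T* by T*_{i,j} = (a_i/ã_i)^{1/2} · T̃_{i,j} · exp(−C_{i,j}/(2λ)) · (b_j/b̃_j)^{1/2}, where ã_i = ∑_j T̃_{i,j} and b̃_j = ∑_i T̃_{i,j}. Then F_λ(T*) ≤ F_λ(T̃); that is, the KL multiplicative update does not increase the KL-penalized unbalanced optimal transport objective. -/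
open Finset

/-- The KL-penalized unbalanced optimal transport objective
`F_λ(T) = ∑_{i,j} C_{i,j} T_{i,j} + λ D_KL(T𝟙_m, a) + λ D_KL(Tᵀ𝟙_n, b)`. -/
noncomputable def FobjKL {n m : ℕ} (C : Matrix (Fin n) (Fin m) ℝ)
    (a : Fin n → ℝ) (b : Fin m → ℝ) (lam : ℝ)
    (T : Matrix (Fin n) (Fin m) ℝ) : ℝ :=
  (∑ i, ∑ j, C i j * T i j)
    + lam * ∑ i, dKL (∑ j, T i j) (a i)
    + lam * ∑ j, dKL (∑ i, T i j) (b j)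

/-- Nonnegativity of the pointwise KL divergence, in log-difference form. -/
lemma dkl_aux {u v : ℝ} (hu : 0 < u) (hv : 0 < v) :
    u - v ≤ u * (Real.log u - Real.log v) := by
  have h := Real.log_le_sub_one_of_pos (show 0 < v / u by positivity)
  rw [Real.log_div hv.ne' hu.ne'] at h
  have h2 : u * (Real.log v - Real.log u) ≤ u * (v / u - 1) :=
    mul_le_mul_of_nonneg_left h hu.le
  have h3 : u * (v / u - 1) = v - u := by field_simp
  nlinarith

/-- A stationary point of `t ↦ K t + 2λ (t log t − t)` is a global minimum on positives. -/
lemma min_point {lam K s t : ℝ} (hlam : 0 < lam) (hs : 0 < s) (ht : 0 < t)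
    (hK : Real.log t = -(K / (2 * lam))) :
    K * t + 2 * lam * (t * Real.log t - t) ≤ K * s + 2 * lam * (s * Real.log s - s) := by
  have hd := dkl_aux hs ht
  have hKt : K = -(2 * lam) * Real.log t := by rw [hK]; field_simp
  have hd2 : (2 * lam) * (s - t) ≤ (2 * lam) * (s * (Real.log s - Real.log t)) :=
    mul_le_mul_of_nonneg_left hd (by positivity)
  rw [hKt]; nlinarith

/-- The log-sum inequality. -/
lemma log_sum_ineq {m : ℕ} (hm : 0 < m) (x y : Fin m → ℝ)
    (hx : ∀ j, 0 < x j) (hy : ∀ j, 0 < y j) :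
    (∑ j, x j) * (Real.log (∑ j, x j) - Real.log (∑ j, y j))
      ≤ ∑ j, x j * (Real.log (x j) - Real.log (y j)) := by
  have : Nonempty (Fin m) := ⟨⟨0, hm⟩⟩
  set S := ∑ j, x j with hSdef
  set Y := ∑ j, y j with hYdef
  have hS : 0 < S := Finset.sum_pos (fun j _ => hx j) Finset.univ_nonempty
  have hY : 0 < Y := Finset.sum_pos (fun j _ => hy j) Finset.univ_nonempty
  have key : ∀ j, x j - y j * (S / Y)
      ≤ x j * (Real.log (x j) - Real.log (y j) - Real.log S + Real.log Y) := by
    intro j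
    have h := dkl_aux (hx j) (mul_pos (hy j) (div_pos hS hY))
    have hlog : Real.log (y j * (S / Y))
        = Real.log (y j) + Real.log S - Real.log Y := by
      rw [Real.log_mul (hy j).ne' (div_pos hS hY).ne', Real.log_div hS.ne' hY.ne']
      ring
    rw [hlog] at h
    nlinarith
  have hsum := Finset.sum_le_sum (s := Finset.univ) (fun j _ => key j)
  have e1 : ∑ j, (x j - y j * (S / Y)) = 0 := by
    rw [Finset.sum_sub_distrib, ← Finset.sum_mul, ← hYdef]
    field_simp
    linarith [hSdef]
  have e2 : ∑ j, x j * (Real.log (x j) - Real.log (y j) - Real.log S + Real.log Y)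
      = (∑ j, x j * (Real.log (x j) - Real.log (y j)))
        - S * Real.log S + S * Real.log Y := by
    have : ∀ j, x j * (Real.log (x j) - Real.log (y j) - Real.log S + Real.log Y)
        = x j * (Real.log (x j) - Real.log (y j)) - x j * Real.log S
          + x j * Real.log Y := by intro j; ring
    rw [Finset.sum_congr rfl (fun j _ => this j), Finset.sum_add_distrib,
      Finset.sum_sub_distrib, ← Finset.sum_mul, ← Finset.sum_mul, ← hSdef]
  rw [e1, e2] at hsum
  have hexp : S * (Real.log S - Real.log Y) = S * Real.log S - S * Real.log Y := by ring
  linarith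

/-- The Jensen/row-bound step: the true marginal KL term is bounded by its surrogate. -/
lemma row_bound {m : ℕ} (hm : 0 < m) {ai : ℝ} (hai : 0 < ai)
    (x y : Fin m → ℝ) (hx : ∀ j, 0 < x j) (hy : ∀ j, 0 < y j) :
    dKL (∑ j, x j) ai
      ≤ (∑ j, (x j * Real.log (x j * (∑ l, y l) / (y j * ai)) - x j)) + ai := by
  have : Nonempty (Fin m) := ⟨⟨0, hm⟩⟩
  set S := ∑ j, x j with hSdef
  set A := ∑ l, y l with hAdef
  have hS : 0 < S := Finset.sum_pos (fun j _ => hx j) Finset.univ_nonempty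
  have hA : 0 < A := Finset.sum_pos (fun j _ => hy j) Finset.univ_nonempty
  have expand : ∀ j, x j * Real.log (x j * A / (y j * ai)) - x j
      = x j * (Real.log (x j) - Real.log (y j)) + x j * Real.log A
        - x j * Real.log ai - x j := by
    intro j
    rw [Real.log_div (mul_pos (hx j) hA).ne' (mul_pos (hy j) hai).ne',
      Real.log_mul (hx j).ne' hA.ne', Real.log_mul (hy j).ne' hai.ne']
    ring
  have e2 : ∑ j, (x j * Real.log (x j * A / (y j * ai)) - x j)
      = (∑ j, x j * (Real.log (x j) - Real.log (y j)))
        + S * Real.log A - S * Real.log ai - S := by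
    rw [Finset.sum_congr rfl (fun j _ => expand j)]
    rw [Finset.sum_sub_distrib, Finset.sum_sub_distrib, Finset.sum_add_distrib,
      ← Finset.sum_mul, ← Finset.sum_mul, ← hSdef]
  rw [e2]
  have hls := log_sum_ineq hm x y hx hy
  rw [← hSdef, ← hAdef] at hls
  rw [dKL, Real.log_div hS.ne' hai.ne']
  nlinarith

/-- Surrogate objective (entrywise majorizer of `FobjKL` at `Ttil`). -/
noncomputable def Esur {n m : ℕ} (C : Matrix (Fin n) (Fin m) ℝ)
    (a : Fin n → ℝ) (b : Fin m → ℝ) (lam : ℝ)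
    (Ttil T : Matrix (Fin n) (Fin m) ℝ) : ℝ :=
  (∑ i, ∑ j, C i j * T i j)
    + lam * ∑ i, ((∑ j, (T i j * Real.log (T i j * (∑ l, Ttil i l) / (Ttil i j * a i)) - T i j)) + a i)
    + lam * ∑ j, ((∑ i, (T i j * Real.log (T i j * (∑ k, Ttil k j) / (Ttil i j * b j)) - T i j)) + b j)

lemma Esur_eq_double {n m : ℕ} (C : Matrix (Fin n) (Fin m) ℝ)
    (a : Fin n → ℝ) (b : Fin m → ℝ) (lam : ℝ)
    (Ttil T : Matrix (Fin n) (Fin m) ℝ) :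
    Esur C a b lam Ttil T
      = (∑ i, ∑ j, (C i j * T i j
          + lam * (T i j * Real.log (T i j * (∑ l, Ttil i l) / (Ttil i j * a i)) - T i j)
          + lam * (T i j * Real.log (T i j * (∑ k, Ttil k j) / (Ttil i j * b j)) - T i j)))
        + (lam * ∑ i, a i + lam * ∑ j, b j) := by
  unfold Esur
  have hc : ∑ j, ∑ i, (T i j * Real.log (T i j * (∑ k, Ttil k j) / (Ttil i j * b j)) - T i j)
      = ∑ i, ∑ j, (T i j * Real.log (T i j * (∑ k, Ttil k j) / (Ttil i j * b j)) - T i j) :=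
    Finset.sum_comm
  have hR : ∀ (f g h : Fin n → Fin m → ℝ),
      ∑ i, ∑ j, (f i j + g i j + h i j)
        = (∑ i, ∑ j, f i j) + (∑ i, ∑ j, g i j) + (∑ i, ∑ j, h i j) := by
    intro f g h
    simp [Finset.sum_add_distrib]
  have hL : ∀ (f : Fin n → Fin m → ℝ),
      ∑ i, ∑ j, lam * f i j = lam * ∑ i, ∑ j, f i j := by
    intro f
    simp_rw [← Finset.mul_sum]
  rw [hR, hL, hL,
    Finset.sum_add_distrib (f := fun i => ∑ j, (T i j * Real.log (T i j * (∑ l, Ttil i l) / (Ttil i j * a i)) - T i j)) (g := a),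
    Finset.sum_add_distrib (f := fun j => ∑ i, (T i j * Real.log (T i j * (∑ k, Ttil k j) / (Ttil i j * b j)) - T i j)) (g := b),
    hc]
  ring

/-- Per-entry comparison: the update minimizes each entrywise surrogate term. -/
lemma entry_le {lam c ttil Aa Bb ai bj : ℝ} (hlam : 0 < lam) (ht : 0 < ttil)
    (hA : 0 < Aa) (hB : 0 < Bb) (hai : 0 < ai) (hbj : 0 < bj)
    {t : ℝ} (htdef : t = Real.sqrt (ai / Aa) * ttil * Real.exp (-c / (2 * lam)) * Real.sqrt (bj / Bb)) :
    c * t + lam * (t * Real.log (t * Aa / (ttil * ai)) - t)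
        + lam * (t * Real.log (t * Bb / (ttil * bj)) - t)
      ≤ c * ttil + lam * (ttil * Real.log (ttil * Aa / (ttil * ai)) - ttil)
          + lam * (ttil * Real.log (ttil * Bb / (ttil * bj)) - ttil) := by
  have htpos : 0 < t := by
    rw [htdef]
    have h1 : 0 < Real.sqrt (ai / Aa) := Real.sqrt_pos.mpr (by positivity)
    have h2 : 0 < Real.sqrt (bj / Bb) := Real.sqrt_pos.mpr (by positivity)
    positivity
  set K : ℝ := c + lam * (Real.log Aa - Real.log ttil - Real.log ai)
      + lam * (Real.log Bb - Real.log ttil - Real.log bj) with hKdef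
  have hs1 : 0 < Real.sqrt (ai / Aa) := Real.sqrt_pos.mpr (by positivity)
  have hs2 : 0 < Real.sqrt (bj / Bb) := Real.sqrt_pos.mpr (by positivity)
  have hlogt : Real.log t = -(K / (2 * lam)) := by
    rw [htdef,
      Real.log_mul (mul_pos (mul_pos hs1 ht) (Real.exp_pos _)).ne' hs2.ne',
      Real.log_mul (mul_pos hs1 ht).ne' (Real.exp_pos _).ne',
      Real.log_mul hs1.ne' ht.ne',
      Real.log_exp, Real.log_sqrt (by positivity), Real.log_sqrt (by positivity),
      Real.log_div hai.ne' hA.ne', Real.log_div hbj.ne' hB.ne', hKdef]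
    field_simp
    ring
  have hform : ∀ u : ℝ, 0 < u →
      c * u + lam * (u * Real.log (u * Aa / (ttil * ai)) - u)
        + lam * (u * Real.log (u * Bb / (ttil * bj)) - u)
      = K * u + 2 * lam * (u * Real.log u - u) := by
    intro u hu
    rw [Real.log_div (mul_pos hu hA).ne' (mul_pos ht hai).ne',
      Real.log_div (mul_pos hu hB).ne' (mul_pos ht hbj).ne',
      Real.log_mul hu.ne' hA.ne', Real.log_mul hu.ne' hB.ne',
      Real.log_mul ht.ne' hai.ne', Real.log_mul ht.ne' hbj.ne', hKdef]
    ring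
  rw [hform t htpos, hform ttil ht]
  exact min_point hlam ht htpos hlogt

/-- The KL multiplicative update does not increase the KL-penalized UOT objective. -/
theorem kl_update_decreases_objective {n m : ℕ} (C : Matrix (Fin n) (Fin m) ℝ)
    (a : Fin n → ℝ) (b : Fin m → ℝ) (ha : ∀ i, 0 < a i) (hb : ∀ j, 0 < b j)
    (lam : ℝ) (hlam : 0 < lam)
    (Ttil : Matrix (Fin n) (Fin m) ℝ) (hTtil : ∀ i j, 0 < Ttil i j)
    (Tstar : Matrix (Fin n) (Fin m) ℝ)
    (hTstarDef : ∀ i j, Tstar i j =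
      Real.sqrt (a i / ∑ l, Ttil i l) * Ttil i j
        * Real.exp (-(C i j) / (2 * lam)) * Real.sqrt (b j / ∑ k, Ttil k j)) :
    FobjKL C a b lam Tstar ≤ FobjKL C a b lam Ttil := by
  rcases Nat.eq_zero_or_pos m with hm | hm
  · subst hm; simp [FobjKL]
  rcases Nat.eq_zero_or_pos n with hn | hn
  · subst hn; simp [FobjKL]
  have : Nonempty (Fin m) := ⟨⟨0, hm⟩⟩
  have : Nonempty (Fin n) := ⟨⟨0, hn⟩⟩
  have hA : ∀ i, 0 < ∑ l, Ttil i l :=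
    fun i => Finset.sum_pos (fun l _ => hTtil i l) Finset.univ_nonempty
  have hB : ∀ j, 0 < ∑ k, Ttil k j :=
    fun j => Finset.sum_pos (fun k _ => hTtil k j) Finset.univ_nonempty
  have hTs : ∀ i j, 0 < Tstar i j := by
    intro i j
    rw [hTstarDef i j]
    have h1 : 0 < Real.sqrt (a i / ∑ l, Ttil i l) :=
      Real.sqrt_pos.mpr (div_pos (ha i) (hA i))
    have h2 : 0 < Real.sqrt (b j / ∑ k, Ttil k j) :=
      Real.sqrt_pos.mpr (div_pos (hb j) (hB j))
    exact mul_pos (mul_pos (mul_pos h1 (hTtil i j)) (Real.exp_pos _)) h2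
  -- Step 1: FobjKL(Tstar) ≤ Esur(Tstar)
  have step1 : FobjKL C a b lam Tstar ≤ Esur C a b lam Ttil Tstar := by
    unfold FobjKL Esur
    refine add_le_add (add_le_add le_rfl ?_) ?_
    · refine mul_le_mul_of_nonneg_left (Finset.sum_le_sum fun i _ => ?_) hlam.le
      exact row_bound hm (ha i) (fun j => Tstar i j) (fun j => Ttil i j)
        (fun j => hTs i j) (fun j => hTtil i j)
    · refine mul_le_mul_of_nonneg_left (Finset.sum_le_sum fun j _ => ?_) hlam.le
      exact row_bound hn (hb j) (fun i => Tstar i j) (fun i => Ttil i j)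
        (fun i => hTs i j) (fun i => hTtil i j)
  -- Step 2: Esur(Tstar) ≤ Esur(Ttil)
  have step2 : Esur C a b lam Ttil Tstar ≤ Esur C a b lam Ttil Ttil := by
    rw [Esur_eq_double, Esur_eq_double]
    refine add_le_add (Finset.sum_le_sum fun i _ => Finset.sum_le_sum fun j _ => ?_) le_rfl
    exact entry_le hlam (hTtil i j) (hA i) (hB j) (ha i) (hb j) (hTstarDef i j)
  -- Step 3: Esur(Ttil) = FobjKL(Ttil)
  have step3 : Esur C a b lam Ttil Ttil = FobjKL C a b lam Ttil := by
    have hrow : ∀ i, (∑ j, (Ttil i j * Real.log (Ttil i j * (∑ l, Ttil i l) / (Ttil i j * a i)) - Ttil i j)) + a i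
        = dKL (∑ j, Ttil i j) (a i) := by
      intro i
      have hsimp : ∀ j, Ttil i j * Real.log (Ttil i j * (∑ l, Ttil i l) / (Ttil i j * a i)) - Ttil i j
          = Ttil i j * Real.log ((∑ l, Ttil i l) / a i) - Ttil i j := by
        intro j
        rw [mul_div_mul_left _ _ (hTtil i j).ne']
      rw [Finset.sum_congr rfl (fun j _ => hsimp j), Finset.sum_sub_distrib,
        ← Finset.sum_mul, dKL]
    have hcol : ∀ j, (∑ i, (Ttil i j * Real.log (Ttil i j * (∑ k, Ttil k j) / (Ttil i j * b j)) - Ttil i j)) + b j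
        = dKL (∑ i, Ttil i j) (b j) := by
      intro j
      have hsimp : ∀ i, Ttil i j * Real.log (Ttil i j * (∑ k, Ttil k j) / (Ttil i j * b j)) - Ttil i j
          = Ttil i j * Real.log ((∑ k, Ttil k j) / b j) - Ttil i j := by
        intro i
        rw [mul_div_mul_left _ _ (hTtil i j).ne']
      rw [Finset.sum_congr rfl (fun i _ => hsimp i), Finset.sum_sub_distrib,
        ← Finset.sum_mul, dKL]
    unfold FobjKL Esur
    rw [Finset.sum_congr rfl (fun i _ => hrow i), Finset.sum_congr rfl (fun j _ => hcol j)]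
  calc FobjKL C a b lam Tstar ≤ Esur C a b lam Ttil Tstar := step1
    _ ≤ Esur C a b lam Ttil Ttil := step2
    _ = FobjKL C a b lam Ttil := step3
end

section
/- Let φ(x) = x²/2, let C ∈ ℝ^{n×m}, a ∈ ℝ^n, b ∈ ℝ^m, λ > 0, and let T̃ ∈ ℝ^{n×m} have strictly positive entries. Then the matrix T* defined entrywise by T*_{i,j} = T̃_{i,j} · max(0, a_i + b_j − C_{i,j}/λ) / (ã_i + b̃_j), where ã_i = ∑_j T̃_{i,j} and b̃_j = ∑_i T̃_{i,j}, is the unique minimizer of T ↦ G_λ(T | T̃) over the set of matrices with nonnegative entries. -/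
open Finset

/-- Pointwise Bregman divergence of the quadratic potential `φ(x) = x²/2`:
`d_φ(u, v) = (u − v)²/2`. -/
noncomputable def dL2 (u v : ℝ) : ℝ := (u - v) ^ 2 / 2

/-- The MM auxiliary function `G_λ(T | T̃)` for the quadratic potential. -/
noncomputable def GauxL2 {n m : ℕ} (C : Matrix (Fin n) (Fin m) ℝ)
    (a : Fin n → ℝ) (b : Fin m → ℝ) (lam : ℝ)
    (T Ttil : Matrix (Fin n) (Fin m) ℝ) : ℝ :=
  ∑ i, ∑ j,
    (C i j * T i j
      + lam * (Ttil i j / ∑ l, Ttil i l) *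
          dL2 (T i j / (Ttil i j / ∑ l, Ttil i l)) (a i)
      + lam * (Ttil i j / ∑ k, Ttil k j) *
          dL2 (T i j / (Ttil i j / ∑ k, Ttil k j)) (b j))

lemma quad_min (q p t s : ℝ) (hq : 0 < q) (ht : 0 ≤ t) (hs : s = max 0 (-(p/(2*q)))) :
    q*s^2 + p*s + q*(t-s)^2 ≤ q*t^2 + p*t := by
  rcases le_or_gt (-(p/(2*q))) 0 with h | h
  · rw [hs, max_eq_left h]
    have hp : 0 ≤ p := by
      by_contra hp
      push_neg at hp
      have : p/(2*q) < 0 := div_neg_of_neg_of_pos hp (by linarith)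
      linarith
    nlinarith [mul_nonneg hp ht]
  · rw [hs, max_eq_right h.le]
    apply le_of_eq
    field_simp
    ring

/-- pointwise summand and its quadratic lower bound -/
lemma summand_lb (Cij ai bj lam w A B t s : ℝ) (hlam : 0 < lam) (hw : 0 < w)
    (hA : 0 < A) (hB : 0 < B)
    (hs : s = w * max 0 (ai + bj - Cij / lam) / (A + B)) (ht : 0 ≤ t) :
    (Cij * s + lam * (w/A) * dL2 (s / (w/A)) ai + lam * (w/B) * dL2 (s / (w/B)) bj)
      + (lam * (A + B) / (2 * w)) * (t - s) ^ 2
      ≤ Cij * t + lam * (w/A) * dL2 (t / (w/A)) ai + lam * (w/B) * dL2 (t / (w/B)) bj := by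
  set q : ℝ := lam * (A + B) / (2 * w) with hqdef
  set p : ℝ := Cij - lam * ai - lam * bj with hpdef
  have hq : 0 < q := by positivity
  have hAB : 0 < A + B := by linarith
  have expand : ∀ u : ℝ,
      Cij * u + lam * (w/A) * dL2 (u / (w/A)) ai + lam * (w/B) * dL2 (u / (w/B)) bj
        = q*u^2 + p*u + (lam * (w/A) * ai^2/2 + lam * (w/B) * bj^2/2) := by
    intro u
    simp only [dL2, hqdef, hpdef]
    field_simp
    ring
  have hs' : s = max 0 (-(p/(2*q))) := by
    have h1 : -(p/(2*q)) = (w/(A+B)) * (ai + bj - Cij / lam) := by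
      simp only [hqdef, hpdef]
      field_simp
      ring
    have h2 : max 0 (-(p/(2*q))) = (w/(A+B)) * max 0 (ai + bj - Cij / lam) := by
      rw [h1, mul_max_of_nonneg _ _ (by positivity : (0:ℝ) ≤ w/(A+B)), mul_zero]
    rw [hs, h2]
    ring
  clear_value q p
  have key := quad_min q p t s hq ht hs'
  rw [expand t, expand s]
  linarith

/-- The ℓ2 multiplicative update
`T*_{i,j} = T̃_{i,j} · max(0, a_i + b_j − C_{i,j}/λ) / (ã_i + b̃_j)`
is the unique minimizer of `G_λ(· | T̃)` over matrices with nonnegative entries. -/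
theorem l2_update_minimizes_aux {n m : ℕ} (C : Matrix (Fin n) (Fin m) ℝ)
    (a : Fin n → ℝ) (b : Fin m → ℝ) (lam : ℝ) (hlam : 0 < lam)
    (Ttil : Matrix (Fin n) (Fin m) ℝ) (hTtil : ∀ i j, 0 < Ttil i j)
    (Tstar : Matrix (Fin n) (Fin m) ℝ)
    (hTstarDef : ∀ i j, Tstar i j =
      Ttil i j * max 0 (a i + b j - C i j / lam)
        / ((∑ l, Ttil i l) + (∑ k, Ttil k j))) :
    (∀ i j, 0 ≤ Tstar i j)
      ∧ (∀ T : Matrix (Fin n) (Fin m) ℝ, (∀ i j, 0 ≤ T i j) →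
          GauxL2 C a b lam Tstar Ttil ≤ GauxL2 C a b lam T Ttil)
      ∧ (∀ T : Matrix (Fin n) (Fin m) ℝ, (∀ i j, 0 ≤ T i j) →
          GauxL2 C a b lam T Ttil = GauxL2 C a b lam Tstar Ttil → T = Tstar) := by
  have hA : ∀ (i : Fin n) (j : Fin m), 0 < ∑ l, Ttil i l := fun i j =>
    Finset.sum_pos (fun l _ => hTtil i l) ⟨j, Finset.mem_univ j⟩
  have hB : ∀ (i : Fin n) (j : Fin m), 0 < ∑ k, Ttil k j := fun i j =>
    Finset.sum_pos (fun k _ => hTtil k j) ⟨i, Finset.mem_univ i⟩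
  have hQpos : ∀ (i : Fin n) (j : Fin m),
      0 < lam * ((∑ l, Ttil i l) + (∑ k, Ttil k j)) / (2 * Ttil i j) := by
    intro i j
    have := hA i j; have := hB i j; have := hTtil i j
    positivity
  have hstar_nonneg : ∀ i j, 0 ≤ Tstar i j := by
    intro i j
    rw [hTstarDef]
    apply div_nonneg (mul_nonneg (hTtil i j).le (le_max_left _ _))
    have := hA i j; have := hB i j; linarith
  have hdiff : ∀ T : Matrix (Fin n) (Fin m) ℝ, (∀ i j, 0 ≤ T i j) →
      GauxL2 C a b lam Tstar Ttil
        + ∑ i, ∑ j, (lam * ((∑ l, Ttil i l) + (∑ k, Ttil k j)) / (2 * Ttil i j))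
            * (T i j - Tstar i j) ^ 2
        ≤ GauxL2 C a b lam T Ttil := by
    intro T hT
    unfold GauxL2
    rw [← Finset.sum_add_distrib]
    apply Finset.sum_le_sum
    intro i _
    rw [← Finset.sum_add_distrib]
    apply Finset.sum_le_sum
    intro j _
    exact summand_lb (C i j) (a i) (b j) lam (Ttil i j) (∑ l, Ttil i l) (∑ k, Ttil k j)
      (T i j) (Tstar i j) hlam (hTtil i j) (hA i j) (hB i j) (hTstarDef i j) (hT i j)
  have hsum_nonneg : ∀ T : Matrix (Fin n) (Fin m) ℝ,
      0 ≤ ∑ i, ∑ j, (lam * ((∑ l, Ttil i l) + (∑ k, Ttil k j)) / (2 * Ttil i j))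
            * (T i j - Tstar i j) ^ 2 := by
    intro T
    apply Finset.sum_nonneg; intro i _
    apply Finset.sum_nonneg; intro j _
    exact mul_nonneg (hQpos i j).le (sq_nonneg _)
  refine ⟨hstar_nonneg, fun T hT => by linarith [hdiff T hT, hsum_nonneg T], ?_⟩
  intro T hT heq
  have hzero : ∑ i, ∑ j, (lam * ((∑ l, Ttil i l) + (∑ k, Ttil k j)) / (2 * Ttil i j))
      * (T i j - Tstar i j) ^ 2 = 0 := le_antisymm (by linarith [hdiff T hT]) (hsum_nonneg T)
  ext i j
  have h1 := (Finset.sum_eq_zero_iff_of_nonneg (fun i _ => Finset.sum_nonneg fun j _ =>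
      mul_nonneg (hQpos i j).le (sq_nonneg _))).mp hzero i (Finset.mem_univ i)
  have h2 := (Finset.sum_eq_zero_iff_of_nonneg (fun j _ =>
      mul_nonneg (hQpos i j).le (sq_nonneg _))).mp h1 j (Finset.mem_univ j)
  have h3 : (T i j - Tstar i j) ^ 2 = 0 := by
    rcases mul_eq_zero.mp h2 with h | h
    · exact absurd h (hQpos i j).ne'
    · exact h
  have := sq_eq_zero_iff.mp h3
  linarith
end

section
/- Let C ∈ ℝ^{n×m}, let a ∈ ℝ^n and b ∈ ℝ^m have strictly positive entries, let λ₁, λ₂, λ_reg ≥ 0 with Λ = λ₁ + λ₂ + λ_reg > 0, and let T̃ ∈ ℝ^{n×m} have strictly positive entries with ã_i = ∑_j T̃_{i,j} and b̃_j = ∑_i T̃_{i,j}. Then the unique minimizer, over matrices with strictly positive entries, of the auxiliary function G(T | T̃) = ∑_{i,j} [ C_{i,j} T_{i,j} + λ₁·α̃_{i,j}·d_φ(T_{i,j}/α̃_{i,j}, a_i) + λ₂·β̃_{i,j}·d_φ(T_{i,j}/β̃_{i,j}, b_j) + λ_reg·d_φ(T_{i,j}, a_i·b_j) ] is given entrywise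 by T*_{i,j} = (a_i/ã_i)^{λ₁/Λ} · (T̃_{i,j})^{(λ₁+λ₂)/Λ} · (a_i·b_j)^{λ_reg/Λ} · exp(−C_{i,j}/Λ) · (b_j/b̃_j)^{λ₂/Λ}. -/
open Finset

/-- The MM auxiliary function for entropy-regularized, KL-penalized UOT with
marginal penalty weights `λ₁, λ₂` and entropic regularization weight `λ_reg`. -/
noncomputable def GauxKLreg {n m : ℕ} (C : Matrix (Fin n) (Fin m) ℝ)
    (a : Fin n → ℝ) (b : Fin m → ℝ) (lam1 lam2 lamreg : ℝ)
    (T Ttil : Matrix (Fin n) (Fin m) ℝ) : ℝ :=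
  ∑ i, ∑ j,
    (C i j * T i j
      + lam1 * (Ttil i j / ∑ l, Ttil i l) *
          dKL (T i j / (Ttil i j / ∑ l, Ttil i l)) (a i)
      + lam2 * (Ttil i j / ∑ k, Ttil k j) *
          dKL (T i j / (Ttil i j / ∑ k, Ttil k j)) (b j)
      + lamreg * dKL (T i j) (a i * b j))

lemma dKL_nonneg_s8 {t s : ℝ} (ht : 0 < t) (hs : 0 < s) : 0 ≤ dKL t s := by
  have h := Real.log_le_sub_one_of_pos (div_pos hs ht)
  have hlog : Real.log (t / s) = - Real.log (s / t) := by
    rw [← Real.log_inv, inv_div]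
  unfold dKL
  rw [hlog]
  have : t * (s / t) = s := by field_simp
  nlinarith [mul_le_mul_of_nonneg_left h ht.le]

lemma dKL_pos_s8 {t s : ℝ} (ht : 0 < t) (hs : 0 < s) (hne : t ≠ s) : 0 < dKL t s := by
  have hne' : s / t ≠ 1 := by
    intro h
    exact hne (by field_simp at h; linarith)
  have h := Real.log_lt_sub_one_of_pos (div_pos hs ht) hne'
  have hlog : Real.log (t / s) = - Real.log (s / t) := by
    rw [← Real.log_inv, inv_div]
  unfold dKL
  rw [hlog]
  have : t * (s / t) = s := by field_simp
  nlinarith [mul_lt_mul_of_pos_left h ht]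

lemma entry_expand (lam1 lam2 lamreg α β A B c t : ℝ)
    (hα : 0 < α) (hβ : 0 < β) (hA : 0 < A) (hB : 0 < B) (ht : 0 < t) :
    c * t + lam1 * α * dKL (t / α) A + lam2 * β * dKL (t / β) B
      + lamreg * dKL t (A * B)
    = (lam1 + lam2 + lamreg) * (t * Real.log t - t)
      + t * (c - lam1 * Real.log (α * A) - lam2 * Real.log (β * B)
              - lamreg * Real.log (A * B))
      + (lam1 * α * A + lam2 * β * B + lamreg * A * B) := by
  unfold dKL
  rw [div_div, div_div,
    Real.log_div ht.ne' (by positivity),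
    Real.log_div ht.ne' (by positivity),
    Real.log_div ht.ne' (by positivity)]
  field_simp
  ring

lemma entry_diff (lam1 lam2 lamreg α β A B c t s : ℝ)
    (hα : 0 < α) (hβ : 0 < β) (hA : 0 < A) (hB : 0 < B) (ht : 0 < t) (hs : 0 < s)
    (hKey : (lam1 + lam2 + lamreg) * Real.log s
      = lam1 * Real.log (α * A) + lam2 * Real.log (β * B)
        + lamreg * Real.log (A * B) - c) :
    c * t + lam1 * α * dKL (t / α) A + lam2 * β * dKL (t / β) B
      + lamreg * dKL t (A * B)
    = (c * s + lam1 * α * dKL (s / α) A + lam2 * β * dKL (s / β) B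
        + lamreg * dKL s (A * B))
      + (lam1 + lam2 + lamreg) * dKL t s := by
  rw [entry_expand lam1 lam2 lamreg α β A B c t hα hβ hA hB ht,
    entry_expand lam1 lam2 lamreg α β A B c s hα hβ hA hB hs]
  unfold dKL
  rw [Real.log_div ht.ne' hs.ne']
  nlinarith [hKey]

lemma log_star (lam1 lam2 lamreg A B c Tt sa sb : ℝ)
    (hΛ : 0 < lam1 + lam2 + lamreg)
    (hA : 0 < A) (hB : 0 < B) (hTt : 0 < Tt) (hsa : 0 < sa) (hsb : 0 < sb) :
    (lam1 + lam2 + lamreg) * Real.log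
      ((A / sa) ^ (lam1 / (lam1 + lam2 + lamreg))
        * Tt ^ ((lam1 + lam2) / (lam1 + lam2 + lamreg))
        * (A * B) ^ (lamreg / (lam1 + lam2 + lamreg))
        * Real.exp (-c / (lam1 + lam2 + lamreg))
        * (B / sb) ^ (lam2 / (lam1 + lam2 + lamreg)))
    = lam1 * Real.log (Tt / sa * A) + lam2 * Real.log (Tt / sb * B)
      + lamreg * Real.log (A * B) - c := by
  have h1 : 0 < A / sa := div_pos hA hsa
  have h2 : 0 < B / sb := div_pos hB hsb
  have h3 : 0 < A * B := mul_pos hA hB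
  rw [Real.log_mul (by positivity) (by positivity),
    Real.log_mul (by positivity) (by positivity),
    Real.log_mul (by positivity) (by positivity),
    Real.log_mul (by positivity) (by positivity),
    Real.log_rpow h1, Real.log_rpow hTt, Real.log_rpow h3, Real.log_exp,
    Real.log_rpow h2,
    Real.log_div hA.ne' hsa.ne', Real.log_div hB.ne' hsb.ne',
    Real.log_mul hA.ne' hB.ne',
    Real.log_mul (by positivity : (Tt / sa : ℝ) ≠ 0) hA.ne',
    Real.log_mul (by positivity : (Tt / sb : ℝ) ≠ 0) hB.ne',
    Real.log_div hTt.ne' hsa.ne', Real.log_div hTt.ne' hsb.ne']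
  field_simp
  ring

/-- The multiplicative update for entropy-regularized, KL-penalized UOT:
with `Λ = λ₁ + λ₂ + λ_reg`, the matrix
`T*_{i,j} = (a_i/ã_i)^{λ₁/Λ} (T̃_{i,j})^{(λ₁+λ₂)/Λ} (a_i b_j)^{λ_reg/Λ} exp(−C_{i,j}/Λ) (b_j/b̃_j)^{λ₂/Λ}`
is the unique minimizer of the auxiliary function over matrices with positive entries. -/
theorem klreg_update_minimizes_aux {n m : ℕ} (C : Matrix (Fin n) (Fin m) ℝ)
    (a : Fin n → ℝ) (b : Fin m → ℝ) (ha : ∀ i, 0 < a i) (hb : ∀ j, 0 < b j)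
    (lam1 lam2 lamreg : ℝ) (hlam1 : 0 ≤ lam1) (hlam2 : 0 ≤ lam2)
    (hlamreg : 0 ≤ lamreg) (hΛ : 0 < lam1 + lam2 + lamreg)
    (Ttil : Matrix (Fin n) (Fin m) ℝ) (hTtil : ∀ i j, 0 < Ttil i j)
    (Tstar : Matrix (Fin n) (Fin m) ℝ)
    (hTstarDef : ∀ i j, Tstar i j =
      (a i / ∑ l, Ttil i l) ^ (lam1 / (lam1 + lam2 + lamreg))
        * (Ttil i j) ^ ((lam1 + lam2) / (lam1 + lam2 + lamreg))
        * (a i * b j) ^ (lamreg / (lam1 + lam2 + lamreg))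
        * Real.exp (-(C i j) / (lam1 + lam2 + lamreg))
        * (b j / ∑ k, Ttil k j) ^ (lam2 / (lam1 + lam2 + lamreg))) :
    (∀ i j, 0 < Tstar i j)
      ∧ (∀ T : Matrix (Fin n) (Fin m) ℝ, (∀ i j, 0 < T i j) →
          GauxKLreg C a b lam1 lam2 lamreg Tstar Ttil
            ≤ GauxKLreg C a b lam1 lam2 lamreg T Ttil)
      ∧ (∀ T : Matrix (Fin n) (Fin m) ℝ, (∀ i j, 0 < T i j) →
          GauxKLreg C a b lam1 lam2 lamreg T Ttil
            = GauxKLreg C a b lam1 lam2 lamreg Tstar Ttil → T = Tstar) := by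
  have hrow : ∀ i (j : Fin m), 0 < ∑ l, Ttil i l := fun i j =>
    Finset.sum_pos (fun l _ => hTtil i l) ⟨j, Finset.mem_univ j⟩
  have hcol : ∀ (i : Fin n) j, 0 < ∑ k, Ttil k j := fun i j =>
    Finset.sum_pos (fun k _ => hTtil k j) ⟨i, Finset.mem_univ i⟩
  have hTstarPos : ∀ i j, 0 < Tstar i j := by
    intro i j
    rw [hTstarDef i j]
    have h1 := hrow i j
    have h2 := hcol i j
    have h3 := ha i
    have h4 := hb j
    have h5 := hTtil i j
    positivity
  -- key per-entry identity
  have hentry : ∀ (T : Matrix (Fin n) (Fin m) ℝ), (∀ i j, 0 < T i j) →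
      ∀ i j,
      (C i j * T i j
        + lam1 * (Ttil i j / ∑ l, Ttil i l) *
            dKL (T i j / (Ttil i j / ∑ l, Ttil i l)) (a i)
        + lam2 * (Ttil i j / ∑ k, Ttil k j) *
            dKL (T i j / (Ttil i j / ∑ k, Ttil k j)) (b j)
        + lamreg * dKL (T i j) (a i * b j))
      = (C i j * Tstar i j
        + lam1 * (Ttil i j / ∑ l, Ttil i l) *
            dKL (Tstar i j / (Ttil i j / ∑ l, Ttil i l)) (a i)
        + lam2 * (Ttil i j / ∑ k, Ttil k j) *
            dKL (Tstar i j / (Ttil i j / ∑ k, Ttil k j)) (b j)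
        + lamreg * dKL (Tstar i j) (a i * b j))
        + (lam1 + lam2 + lamreg) * dKL (T i j) (Tstar i j) := by
    intro T hT i j
    have hα : 0 < Ttil i j / ∑ l, Ttil i l := div_pos (hTtil i j) (hrow i j)
    have hβ : 0 < Ttil i j / ∑ k, Ttil k j := div_pos (hTtil i j) (hcol i j)
    refine entry_diff lam1 lam2 lamreg _ _ _ _ _ _ _ hα hβ (ha i) (hb j)
      (hT i j) (hTstarPos i j) ?_
    rw [hTstarDef i j]
    exact log_star lam1 lam2 lamreg (a i) (b j) (C i j) (Ttil i j) _ _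
      hΛ (ha i) (hb j) (hTtil i j) (hrow i j) (hcol i j)
  -- global decomposition
  have hG : ∀ (T : Matrix (Fin n) (Fin m) ℝ), (∀ i j, 0 < T i j) →
      GauxKLreg C a b lam1 lam2 lamreg T Ttil
        = GauxKLreg C a b lam1 lam2 lamreg Tstar Ttil
          + ∑ i, ∑ j, (lam1 + lam2 + lamreg) * dKL (T i j) (Tstar i j) := by
    intro T hT
    unfold GauxKLreg
    rw [← Finset.sum_add_distrib]
    refine Finset.sum_congr rfl fun i _ => ?_
    rw [← Finset.sum_add_distrib]
    exact Finset.sum_congr rfl fun j _ => hentry T hT i j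
  refine ⟨hTstarPos, ?_, ?_⟩
  · intro T hT
    rw [hG T hT]
    have : 0 ≤ ∑ i, ∑ j, (lam1 + lam2 + lamreg) * dKL (T i j) (Tstar i j) :=
      Finset.sum_nonneg fun i _ => Finset.sum_nonneg fun j _ =>
        mul_nonneg hΛ.le (dKL_nonneg_s8 (hT i j) (hTstarPos i j))
    linarith
  · intro T hT hEq
    rw [hG T hT] at hEq
    have hsum0 : ∑ i, ∑ j, (lam1 + lam2 + lamreg) * dKL (T i j) (Tstar i j) = 0 := by
      linarith
    have hterm : ∀ i ∈ Finset.univ, ∀ j ∈ Finset.univ,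
        (lam1 + lam2 + lamreg) * dKL (T i j) (Tstar i j) = 0 := by
      have h := (Finset.sum_eq_zero_iff_of_nonneg (fun i _ =>
        Finset.sum_nonneg fun j _ =>
          mul_nonneg hΛ.le (dKL_nonneg_s8 (hT i j) (hTstarPos i j)))).mp hsum0
      intro i hi j hj
      exact (Finset.sum_eq_zero_iff_of_nonneg (fun j _ =>
        mul_nonneg hΛ.le (dKL_nonneg_s8 (hT i j) (hTstarPos i j)))).mp (h i hi) j hj
    funext i j
    by_contra hne
    have := dKL_pos_s8 (hT i j) (hTstarPos i j) hne
    have h0 := hterm i (Finset.mem_univ i) j (Finset.mem_univ j)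
    nlinarith
end
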